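/- Fix λ ∈ [0,2π) and a sequence {C_x}_{x∈ℤ} of 3×3 unitary matrices with entries a_x^{(i,j)} such that inf_{x∈ℤ} |e^{iλ} − a_x^{(2,2)}| > 0. Let M = { Ψ ∈ ℓ²(ℤ;ℂ³) : (e^{iλ} − a_x^{(2,2)}) Ψ₂(x) = a_x^{(2,1)} Ψ₁(x) + a_x^{(2,3)} Ψ₃(x) for all x ∈ ℤ }. Then the map ι : M → ℓ²(ℤ;ℂ²) defined by (ιΨ)(x) = (Ψ₁(x−1), Ψ₃(x))ᵗ is a bijection; in particular, for every Ψ̃ ∈ ℓ²(ℤ;ℂ²) the function Ψ given by Ψ₁(x) = Ψ̃₁(x+1), Ψ₃(x) = Ψ̃₂(x), Ψ₂(x) = (a_x^{(2,1)} Ψ̃₁(x+1) + a_x^{(2,3)} Ψ̃₂(x))/(e^{iλ} − a_x^{(2,2)}) belongs to ℓ²(ℤ;ℂ³). -/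
import Mathlib


open Complex Matrix ComplexConjugate

noncomputable section

/-- Membership in the domain `M` of the map `ι`: a square-summable `Ψ : ℤ → ℂ³`
satisfying `(e^{iλ} − a_x^{(2,2)}) Ψ₂(x) = a_x^{(2,1)} Ψ₁(x) + a_x^{(2,3)} Ψ₃(x)` for
all `x`. -/
def MemDomIota (a : ℤ → Matrix (Fin 3) (Fin 3) ℂ) (lam : ℝ) (Ψ : ℤ → Fin 3 → ℂ) : Prop :=
  Summable (fun x : ℤ => ∑ i, ‖Ψ x i‖ ^ 2) ∧
    ∀ x : ℤ,
      (Complex.exp (lam * Complex.I) - a x 1 1) * Ψ x 1 =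
        a x 1 0 * Ψ x 0 + a x 1 2 * Ψ x 2

set_option maxHeartbeats 1000000 in
/-- the map `ι : M → ℓ²(ℤ;ℂ²)`, `(ιΨ)(x) = (Ψ₁(x−1), Ψ₃(x))ᵗ`, is a
bijection; in particular, every square-summable `Ψ̃ : ℤ → ℂ²` has the (unique)
preimage `Ψ` given by `Ψ₁(x) = Ψ̃₁(x+1)`, `Ψ₃(x) = Ψ̃₂(x)`,
`Ψ₂(x) = (a_x^{(2,1)} Ψ̃₁(x+1) + a_x^{(2,3)} Ψ̃₂(x))/(e^{iλ} − a_x^{(2,2)})`, which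
again lies in `ℓ²(ℤ;ℂ³)`. -/
theorem iota_bijective (a : ℤ → Matrix (Fin 3) (Fin 3) ℂ)
    (hunit : ∀ x, a x ∈ Matrix.unitaryGroup (Fin 3) ℂ)
    (lam : ℝ)
    (hinf : 0 < ⨅ x : ℤ, ‖Complex.exp (lam * Complex.I) - a x 1 1‖) :
    -- `ι` maps `M` into `ℓ²(ℤ;ℂ²)`
    (∀ Ψ : ℤ → Fin 3 → ℂ, MemDomIota a lam Ψ →
      Summable (fun x : ℤ => ‖Ψ (x - 1) 0‖ ^ 2 + ‖Ψ x 2‖ ^ 2)) ∧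
    -- `ι` is injective on `M`
    (∀ Ψ Φ : ℤ → Fin 3 → ℂ, MemDomIota a lam Ψ → MemDomIota a lam Φ →
      (∀ x : ℤ, Ψ (x - 1) 0 = Φ (x - 1) 0 ∧ Ψ x 2 = Φ x 2) → Ψ = Φ) ∧
    -- `ι` is surjective onto `ℓ²(ℤ;ℂ²)`, with the displayed preimage in `ℓ²(ℤ;ℂ³)`
    (∀ Ψt : ℤ → Fin 2 → ℂ, Summable (fun x : ℤ => ∑ i, ‖Ψt x i‖ ^ 2) →
      MemDomIota a lam (fun x : ℤ =>
        ![Ψt (x + 1) 0,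
          (a x 1 0 * Ψt (x + 1) 0 + a x 1 2 * Ψt x 1) /
            (Complex.exp (lam * Complex.I) - a x 1 1),
          Ψt x 1]) ∧
      ∀ x : ℤ,
        (fun y : ℤ =>
          ![Ψt (y + 1) 0,
            (a y 1 0 * Ψt (y + 1) 0 + a y 1 2 * Ψt y 1) /
              (Complex.exp (lam * Complex.I) - a y 1 1),
            Ψt y 1]) (x - 1) 0 = Ψt x 0 ∧
        (fun y : ℤ =>
          ![Ψt (y + 1) 0,
            (a y 1 0 * Ψt (y + 1) 0 + a y 1 2 * Ψt y 1) /
              (Complex.exp (lam * Complex.I) - a y 1 1),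
            Ψt y 1]) x 2 = Ψt x 1) := by
  have hbdd : BddBelow (Set.range fun x : ℤ => ‖Complex.exp (lam * Complex.I) - a x 1 1‖) :=
    ⟨0, by rintro _ ⟨x, rfl⟩; positivity⟩
  have hεle : ∀ x : ℤ, (⨅ x : ℤ, ‖Complex.exp (lam * Complex.I) - a x 1 1‖) ≤
      ‖Complex.exp (lam * Complex.I) - a x 1 1‖ := fun x => ciInf_le hbdd x
  set ε := ⨅ x : ℤ, ‖Complex.exp (lam * Complex.I) - a x 1 1‖ with hεdef
  have hne : ∀ x : ℤ, Complex.exp (lam * Complex.I) - a x 1 1 ≠ 0 := by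
    intro x h
    have h2 := hεle x
    rw [h, norm_zero] at h2
    linarith
  have hrow : ∀ x : ℤ, ‖a x 1 0‖ ≤ 1 ∧ ‖a x 1 2‖ ≤ 1 := by
    intro x
    have h := Matrix.mem_unitaryGroup_iff.mp (hunit x)
    have h11 : ((1 : Matrix (Fin 3) (Fin 3) ℂ) 1 1) = ∑ j, a x 1 j * star (a x 1 j) := by
      rw [← h]; simp [Matrix.mul_apply, Matrix.star_apply]
    have h1c : (1 : ℂ) = ∑ j : Fin 3, ((‖a x 1 j‖ : ℂ) ^ 2) := by
      simpa [Matrix.one_apply, RCLike.mul_conj, RCLike.star_def] using h11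
    have hsum1 : ∑ j : Fin 3, ‖a x 1 j‖ ^ 2 = 1 := by
      have : ((∑ j : Fin 3, ‖a x 1 j‖ ^ 2 : ℝ) : ℂ) = 1 := by push_cast; exact h1c.symm
      exact_mod_cast this
    rw [Fin.sum_univ_three] at hsum1
    constructor
    · nlinarith [norm_nonneg (a x 1 0), norm_nonneg (a x 1 1), norm_nonneg (a x 1 2),
        sq_nonneg (‖a x 1 1‖), sq_nonneg (‖a x 1 2‖)]
    · nlinarith [norm_nonneg (a x 1 0), norm_nonneg (a x 1 1), norm_nonneg (a x 1 2),
        sq_nonneg (‖a x 1 0‖), sq_nonneg (‖a x 1 1‖)]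
  refine ⟨?_, ?_, ?_⟩
  · rintro Ψ ⟨hsum, -⟩
    have h0 : Summable (fun x : ℤ => ‖Ψ x 0‖ ^ 2) := by
      refine Summable.of_nonneg_of_le (fun x => by positivity) (fun x => ?_) hsum
      rw [Fin.sum_univ_three]
      nlinarith [sq_nonneg (‖Ψ x 1‖), sq_nonneg (‖Ψ x 2‖)]
    have h2 : Summable (fun x : ℤ => ‖Ψ x 2‖ ^ 2) := by
      refine Summable.of_nonneg_of_le (fun x => by positivity) (fun x => ?_) hsum
      rw [Fin.sum_univ_three]
      nlinarith [sq_nonneg (‖Ψ x 0‖), sq_nonneg (‖Ψ x 1‖)]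
    have h0' : Summable (fun x : ℤ => ‖Ψ (x - 1) 0‖ ^ 2) :=
      ((Equiv.subRight (1 : ℤ)).summable_iff).mpr h0
    exact h0'.add h2
  · rintro Ψ Φ ⟨-, hΨ⟩ ⟨-, hΦ⟩ heq
    have h0 : ∀ x : ℤ, Ψ x 0 = Φ x 0 := by
      intro x
      have := (heq (x + 1)).1
      simpa using this
    have h2 : ∀ x : ℤ, Ψ x 2 = Φ x 2 := fun x => (heq x).2
    funext x i
    fin_cases i
    · exact h0 x
    · have e1 := hΨ x
      rw [h0 x, h2 x, ← hΦ x] at e1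
      exact mul_left_cancel₀ (sub_ne_zero.mpr (fun h => hne x (by rw [h, sub_self]))) e1
    · exact h2 x
  · intro Ψt hsum
    have s0 : Summable (fun x : ℤ => ‖Ψt x 0‖ ^ 2) := by
      refine Summable.of_nonneg_of_le (fun x => by positivity) (fun x => ?_) hsum
      rw [Fin.sum_univ_two]
      nlinarith [sq_nonneg (‖Ψt x 1‖)]
    have s1 : Summable (fun x : ℤ => ‖Ψt x 1‖ ^ 2) := by
      refine Summable.of_nonneg_of_le (fun x => by positivity) (fun x => ?_) hsum
      rw [Fin.sum_univ_two]
      nlinarith [sq_nonneg (‖Ψt x 0‖)]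
    have s0' : Summable (fun x : ℤ => ‖Ψt (x + 1) 0‖ ^ 2) := by
      have h := s0.comp_injective (i := fun x : ℤ => x + 1) (add_left_injective 1)
      exact h
    have sd : Summable (fun x : ℤ =>
        (1 + 2 / ε ^ 2) * (‖Ψt (x + 1) 0‖ ^ 2 + ‖Ψt x 1‖ ^ 2)) :=
      (s0'.add s1).mul_left _
    refine ⟨⟨?_, ?_⟩, ?_⟩
    · refine Summable.of_nonneg_of_le (fun x => ?_) (fun x => ?_) sd
      · positivity
      · have hmid : ‖(a x 1 0 * Ψt (x + 1) 0 + a x 1 2 * Ψt x 1) /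
            (Complex.exp (lam * Complex.I) - a x 1 1)‖ ≤
            (‖Ψt (x + 1) 0‖ + ‖Ψt x 1‖) / ε := by
          rw [norm_div]
          have hnum : ‖a x 1 0 * Ψt (x + 1) 0 + a x 1 2 * Ψt x 1‖ ≤
              ‖Ψt (x + 1) 0‖ + ‖Ψt x 1‖ := by
            calc ‖a x 1 0 * Ψt (x + 1) 0 + a x 1 2 * Ψt x 1‖
                ≤ ‖a x 1 0 * Ψt (x + 1) 0‖ + ‖a x 1 2 * Ψt x 1‖ := norm_add_le _ _
              _ = ‖a x 1 0‖ * ‖Ψt (x + 1) 0‖ + ‖a x 1 2‖ * ‖Ψt x 1‖ := by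
                  rw [norm_mul, norm_mul]
              _ ≤ ‖Ψt (x + 1) 0‖ + ‖Ψt x 1‖ := by
                  have := (hrow x).1; have := (hrow x).2
                  nlinarith [norm_nonneg (Ψt (x + 1) 0), norm_nonneg (Ψt x 1)]
          exact div_le_div₀ (by positivity) hnum hinf (hεle x)
        simp only [Fin.sum_univ_three, Matrix.cons_val_zero, Matrix.cons_val_one,
          Matrix.head_cons, Matrix.cons_val_two, Matrix.tail_cons]
        set u := ‖Ψt (x + 1) 0‖ with hu
        set v := ‖Ψt x 1‖ with hv
        have hu0 : 0 ≤ u := norm_nonneg _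
        have hv0 : 0 ≤ v := norm_nonneg _
        have hm0 : 0 ≤ ‖(a x 1 0 * Ψt (x + 1) 0 + a x 1 2 * Ψt x 1) /
            (Complex.exp (lam * Complex.I) - a x 1 1)‖ := norm_nonneg _
        have hsq : ‖(a x 1 0 * Ψt (x + 1) 0 + a x 1 2 * Ψt x 1) /
            (Complex.exp (lam * Complex.I) - a x 1 1)‖ ^ 2 ≤ ((u + v) / ε) ^ 2 := by
          apply sq_le_sq' _ hmid
          nlinarith [div_nonneg (add_nonneg hu0 hv0) hinf.le]
        have hkey : ((u + v) / ε) ^ 2 ≤ 2 / ε ^ 2 * (u ^ 2 + v ^ 2) := by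
          rw [div_pow, div_mul_eq_mul_div]
          gcongr
          nlinarith [sq_nonneg (u - v)]
        nlinarith [hsq, hkey]
    · intro x
      simp only [Matrix.cons_val_zero, Matrix.cons_val_one, Matrix.head_cons,
        Matrix.cons_val_two, Matrix.tail_cons]
      rw [mul_comm, div_mul_cancel₀ _ (hne x)]
    · intro x
      constructor
      · simp
      · simp
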